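/- arXiv:2208.02702 — 4 statements merged into one kernel-verified Lean document; each statement's English description precedes it below -/
import Mathlib

section
/- Let n ≥ 2 be an integer and let ω > 1 − 2/n be a real number. Then for every real n×n matrix A one has tr(T(ω,A)·Aᵗ) ≥ 0. -/
open Matrix

/-- `T ω A = (ω-1)(tr A) Iₙ + A + Aᵗ`. -/
noncomputable def elastT (n : ℕ) (ω : ℝ) (A : Matrix (Fin n) (Fin n) ℝ) :
    Matrix (Fin n) (Fin n) ℝ :=
  ((ω - 1) * Matrix.trace A) • (1 : Matrix (Fin n) (Fin n) ℝ) + A + Aᵀ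

theorem trace_T_mul_transpose_nonneg (n : ℕ) (hn : 2 ≤ n) (ω : ℝ)
    (hω : 1 - 2 / (n : ℝ) < ω) (A : Matrix (Fin n) (Fin n) ℝ) :
    0 ≤ Matrix.trace (elastT n ω A * Aᵀ) := by
  set t := Matrix.trace A with ht
  set Q : ℝ := ∑ i, ∑ j, (A i j + A j i) ^ 2 with hQdef
  have hf : (∑ i, ∑ j, (A i j * A i j + A i j * A j i)) = Q / 2 := by
    have h1 : Q = ∑ i, ∑ j,
        ((A i j * A i j + A i j * A j i) + (A j i * A j i + A j i * A i j)) := by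
      apply Finset.sum_congr rfl
      intro i _
      apply Finset.sum_congr rfl
      intro j _
      ring
    have h2a : (∑ i, ∑ j, A j i * A j i) = ∑ i, ∑ j, A i j * A i j :=
      Finset.sum_comm
    have h2b : (∑ i, ∑ j, A j i * A i j) = ∑ i, ∑ j, A i j * A j i :=
      Finset.sum_comm
    rw [h1]
    simp only [Finset.sum_add_distrib]
    rw [h2a, h2b]
    ring
  have htrace : Matrix.trace (elastT n ω A * Aᵀ) = (ω - 1) * t ^ 2 + Q / 2 := by
    rw [← hf]
    simp only [elastT, Matrix.add_mul, Matrix.smul_mul, Matrix.one_mul, Matrix.trace_add,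
      Matrix.trace_smul, Matrix.trace_transpose, smul_eq_mul, ← ht]
    have hA : Matrix.trace (A * Aᵀ) = ∑ i, ∑ j, A i j * A i j := by
      simp [Matrix.trace, Matrix.mul_apply, Matrix.diag]
    have hAt : Matrix.trace (Aᵀ * Aᵀ) = ∑ i, ∑ j, A i j * A j i := by
      simp [Matrix.trace, Matrix.mul_apply, Matrix.diag, mul_comm]
    rw [hA, hAt]
    simp only [Finset.sum_add_distrib]
    ring
  rw [htrace]
  -- Cauchy–Schwarz: (2t)^2 ≤ n * ∑ i, (2 A i i)^2 ≤ n * Q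
  have hdiag : (∑ i, (A i i + A i i)) = 2 * t := by
    simp [ht, Matrix.trace, Matrix.diag, Finset.sum_add_distrib, two_mul]
  have hcs : (2 * t) ^ 2 ≤ (n : ℝ) * ∑ i, (A i i + A i i) ^ 2 := by
    have := sq_sum_le_card_mul_sum_sq (s := (Finset.univ : Finset (Fin n)))
      (f := fun i => A i i + A i i)
    simpa [hdiag] using this
  have hdQ : (∑ i, (A i i + A i i) ^ 2) ≤ Q := by
    apply Finset.sum_le_sum
    intro i _
    have : (A i i + A i i) ^ 2 ≤ ∑ j, (A i j + A j i) ^ 2 := by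
      have := Finset.single_le_sum (f := fun j => (A i j + A j i) ^ 2)
        (fun j _ => sq_nonneg _) (Finset.mem_univ i)
      simpa using this
    exact this
  have hQ0 : 0 ≤ Q := by
    apply Finset.sum_nonneg
    intro i _
    exact Finset.sum_nonneg fun j _ => sq_nonneg _
  have hn0 : (0:ℝ) < n := by positivity
  have hω' : (0:ℝ) < (n : ℝ) * (ω - 1) + 2 := by
    have key : (n : ℝ) * (2 / n) = 2 := by field_simp
    nlinarith [mul_lt_mul_of_pos_left hω hn0]
  have h4 : 4 * t ^ 2 ≤ (n : ℝ) * Q := by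
    nlinarith [mul_le_mul_of_nonneg_left hdQ (le_of_lt hn0)]
  nlinarith [mul_nonneg (le_of_lt hn0) hQ0, sq_nonneg t, mul_nonneg hω'.le (sq_nonneg t)]
end

section
/- Let n ≥ 2 be an integer and let ω > 1 − 2/n be a real number. Then for a real n×n matrix A one has tr(T(ω,A)·Aᵗ) = 0 if and only if A + Aᵗ = 0, i.e., if and only if A is skew-symmetric. -/
open Matrix

private lemma trace_mul_transpose_eq_sum {n : ℕ} (M : Matrix (Fin n) (Fin n) ℝ) :
    Matrix.trace (M * Mᵀ) = ∑ i, ∑ j, (M i j)^2 := by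
  simp [Matrix.trace, Matrix.mul_apply, Matrix.diag, sq]

private lemma trace_mul_transpose_nonneg {n : ℕ} (M : Matrix (Fin n) (Fin n) ℝ) :
    0 ≤ Matrix.trace (M * Mᵀ) := by
  rw [trace_mul_transpose_eq_sum]
  positivity

private lemma trace_mul_transpose_eq_zero_iff' {n : ℕ} (M : Matrix (Fin n) (Fin n) ℝ) :
    Matrix.trace (M * Mᵀ) = 0 ↔ M = 0 := by
  rw [trace_mul_transpose_eq_sum]
  constructor
  · intro h
    ext i j
    have h1 : ∀ i ∈ Finset.univ, (0:ℝ) ≤ ∑ j, (M i j)^2 := by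
      intro i _; positivity
    have h2 := (Finset.sum_eq_zero_iff_of_nonneg h1).mp h i (Finset.mem_univ i)
    have h3 : ∀ j ∈ Finset.univ, (0:ℝ) ≤ (M i j)^2 := by intro j _; positivity
    have h4 := (Finset.sum_eq_zero_iff_of_nonneg h3).mp h2 j (Finset.mem_univ j)
    simpa using pow_eq_zero_iff (n := 2) (by norm_num) |>.mp h4
  · intro h; simp [h]

theorem trace_T_mul_transpose_eq_zero_iff (n : ℕ) (hn : 2 ≤ n) (ω : ℝ)
    (hω : 1 - 2 / (n : ℝ) < ω) (A : Matrix (Fin n) (Fin n) ℝ) :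
    Matrix.trace (elastT n ω A * Aᵀ) = 0 ↔ A + Aᵀ = 0 := by
  have hn0 : (n:ℝ) ≠ 0 := by positivity
  set t := Matrix.trace A with ht
  set c : ℝ := 2 * t / n with hc
  set S : Matrix (Fin n) (Fin n) ℝ := A + Aᵀ with hS
  set S0 : Matrix (Fin n) (Fin n) ℝ := S - c • 1 with hS0
  have hSsymm : Sᵀ = S := by
    simp [hS, Matrix.transpose_add, add_comm]
  have hS0symm : S0ᵀ = S0 := by
    simp [hS0, Matrix.transpose_sub, hSsymm]
  have htrS : Matrix.trace S = 2 * t := by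
    simp [hS, Matrix.trace_add, Matrix.trace_transpose, ← ht]; ring
  have htAAT : Matrix.trace (Aᵀ * A) = Matrix.trace (A * Aᵀ) :=
    Matrix.trace_mul_comm _ _
  have htAA : Matrix.trace (Aᵀ * Aᵀ) = Matrix.trace (A * A) := by
    rw [← Matrix.transpose_mul, Matrix.trace_transpose]
  have htrSS : Matrix.trace (S * S) =
      2 * Matrix.trace (A * Aᵀ) + 2 * Matrix.trace (A * A) := by
    simp only [hS, Matrix.add_mul, Matrix.mul_add, Matrix.trace_add, htAAT, htAA]
    ring
  have hone : Matrix.trace (1 : Matrix (Fin n) (Fin n) ℝ) = (n : ℝ) := by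
    simp
  have htrS0 : Matrix.trace (S0 * S0ᵀ) =
      Matrix.trace (S * S) - 2 * c * (2 * t) + c^2 * n := by
    rw [hS0symm]
    simp only [hS0, Matrix.sub_mul, Matrix.mul_sub, Matrix.smul_mul, Matrix.mul_smul,
      Matrix.one_mul, Matrix.mul_one, Matrix.trace_sub, Matrix.trace_smul, smul_smul,
      smul_eq_mul, htrS, hone]
    ring
  have hkey : Matrix.trace (elastT n ω A * Aᵀ) =
      (1/2) * Matrix.trace (S0 * S0ᵀ) + ((ω - 1) + 2 / n) * t^2 := by
    have hL : Matrix.trace (elastT n ω A * Aᵀ) =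
        (ω - 1) * t * t + Matrix.trace (A * Aᵀ) + Matrix.trace (A * A) := by
      simp only [elastT, Matrix.add_mul, Matrix.smul_mul, Matrix.one_mul,
        Matrix.trace_add, Matrix.trace_smul, smul_eq_mul, Matrix.trace_transpose,
        ← Matrix.transpose_mul, ← ht]
    rw [hL, htrS0, htrSS, hc]
    field_simp
    ring
  constructor
  · intro h
    have hX : 0 ≤ Matrix.trace (S0 * S0ᵀ) := trace_mul_transpose_nonneg S0
    have hk : 0 < (ω - 1) + 2 / n := by linarith
    have heq : (1/2) * Matrix.trace (S0 * S0ᵀ) + ((ω - 1) + 2 / n) * t^2 = 0 := by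
      rw [← hkey]; exact h
    have ht2 : 0 ≤ ((ω - 1) + 2 / n) * t^2 := by positivity
    have hS0zero : Matrix.trace (S0 * S0ᵀ) = 0 := by nlinarith
    have ht2z : (ω - 1 + 2 / n) * t^2 = 0 := by linarith
    have htzero : t = 0 := by
      have := (mul_eq_zero.mp ht2z).resolve_left (ne_of_gt hk)
      exact pow_eq_zero_iff (by norm_num) |>.mp this
    have hS0z : S0 = 0 := (trace_mul_transpose_eq_zero_iff' S0).mp hS0zero
    have hcz : c = 0 := by rw [hc, htzero]; ring
    have : S = 0 := by
      have := hS0z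
      rw [hS0, hcz] at this
      simpa using this
    exact this
  · intro h
    have hSz : S = 0 := h
    have htz : t = 0 := by
      have h1 : Matrix.trace S = 0 := by rw [hSz]; simp
      rw [htrS] at h1; linarith
    have : elastT n ω A = 0 := by
      simp only [elastT, ← ht, htz, mul_zero, zero_smul, zero_add, add_assoc]
      simpa [hS, add_assoc] using hSz
    rw [this]
    simp
end

section
/- Let n ≥ 2 be an integer and ω > 1 − 2/n a real number. Let U ⊆ ℝⁿ be an open connected set and let u : U → ℝⁿ be twice continuously differentiable on U with tr(T(ω,Du(x))·Du(x)ᵗ) = 0 for every x ∈ U. Then there exist a skew-symmetric real n×n matrix A and a vector c ∈ ℝⁿ such that u(x) = Ax + c for all x ∈ U. -/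
open Matrix

/-- Partial derivative `∂f/∂x_j` of a scalar field on `ℝⁿ`. -/
noncomputable def pd {n : ℕ} (f : (Fin n → ℝ) → ℝ) (j : Fin n) (x : Fin n → ℝ) : ℝ :=
  fderiv ℝ f x (Pi.single j 1)

/-- The Jacobian matrix `(∂u_i/∂x_j)_{i,j}` of a vector field on `ℝⁿ`. -/
noncomputable def jac {n : ℕ} (u : (Fin n → ℝ) → Fin n → ℝ) (x : Fin n → ℝ) :
    Matrix (Fin n) (Fin n) ℝ :=
  Matrix.of fun i j => pd (fun w => u w i) j x

/-! With `S = A + Aᵀ` one has `tr (T(ω,A) Aᵀ) = (ω - 1) (tr A)² + tr (S Sᵀ) / 2`, while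
Cauchy–Schwarz on the diagonal of `S` gives `4 (tr A)² ≤ n tr (S Sᵀ)`. As `n (1 - ω) < 2`, the
vanishing of the trace forces `S = 0`: the Jacobian of `u` is skew-symmetric throughout `U`.
Then the array `∂ₖ∂ⱼuᵢ` is symmetric in `(j, k)` (Schwarz) and antisymmetric in `(i, j)`, hence
zero. So `Du` is constant on the connected set `U`, and `u` is affine. -/

lemma sq_trace_le_card_mul_trace_mul_transpose {ι R : Type*} [Fintype ι] [Field R]
    [LinearOrder R] [IsStrictOrderedRing R] (A : Matrix ι ι R) :
    trace A ^ 2 ≤ Fintype.card ι * trace (A * Aᵀ) := by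
  have hdiag : ∑ i, A i i ^ 2 ≤ trace (A * Aᵀ) := by
    simp only [trace, diag_apply, mul_apply, transpose_apply, ← sq]
    exact Finset.sum_le_sum fun i _ =>
      Finset.single_le_sum (f := fun j => A i j ^ 2) (fun j _ => sq_nonneg _) (Finset.mem_univ i)
  calc trace A ^ 2 ≤ Fintype.card ι * ∑ i, A i i ^ 2 := sq_sum_le_card_mul_sum_sq
    _ ≤ Fintype.card ι * trace (A * Aᵀ) := by gcongr

lemma trace_elastT_mul_transpose {n : ℕ} (ω : ℝ) (A : Matrix (Fin n) (Fin n) ℝ) :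
    trace (elastT n ω A * Aᵀ) =
      (ω - 1) * trace A ^ 2 + trace ((A + Aᵀ) * (A + Aᵀ)ᵀ) / 2 := by
  have hAA : trace (Aᵀ * Aᵀ) = trace (A * A) := trace_transpose_mul A A
  have hAtA : trace (Aᵀ * A) = trace (A * Aᵀ) := trace_mul_comm _ _
  simp only [elastT, transpose_add, transpose_transpose, add_mul, mul_add, smul_mul, one_mul,
    trace_add, trace_smul, trace_transpose, smul_eq_mul, hAA, hAtA]
  ring

theorem transpose_eq_neg_of_trace_elastT_mul_transpose_eq_zero {n : ℕ} {ω : ℝ}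
    (hω : 1 - 2 / (n : ℝ) < ω) {A : Matrix (Fin n) (Fin n) ℝ}
    (h : trace (elastT n ω A * Aᵀ) = 0) : Aᵀ = -A := by
  rw [trace_elastT_mul_transpose] at h
  set S := A + Aᵀ
  have hS : trace S = 2 * trace A := by simp [S, trace_transpose, two_mul]
  have hCS := sq_trace_le_card_mul_trace_mul_transpose S
  rw [hS, Fintype.card_fin] at hCS
  have hωn : (n : ℝ) * (1 - ω) < 2 := by
    rcases n.eq_zero_or_pos with rfl | hn
    · simp
    · have hn : (0 : ℝ) < n := by exact_mod_cast hn
      calc (n : ℝ) * (1 - ω) < n * (2 / n) := by gcongr; linarith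
        _ = 2 := by field_simp
  have hF : trace (S * Sᵀ) = 2 * (1 - ω) * trace A ^ 2 := by linarith
  have ht : trace A ^ 2 = 0 := by
    rw [hF] at hCS
    nlinarith [sq_nonneg (trace A)]
  rw [ht, mul_zero, ← conjTranspose_eq_transpose_of_trivial,
    trace_mul_conjTranspose_self_eq_zero_iff] at hF
  exact eq_neg_of_add_eq_zero_right hF

lemma eq_zero_of_symm_of_antisymm {α G : Type*} [AddGroup G] [IsAddTorsionFree G]
    {f : α → α → α → G} (hsymm : ∀ a b c, f a b c = f b a c)
    (hanti : ∀ a b c, f a b c = -f a c b) (a b c : α) : f a b c = 0 := by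
  refine self_eq_neg.mp ?_
  calc f a b c = -f a c b := hanti ..
    _ = -f c a b := by rw [hsymm]
    _ = f c b a := by rw [hanti c a b, neg_neg]
    _ = f b c a := hsymm ..
    _ = -f b a c := hanti ..
    _ = -f a b c := by rw [hsymm]

lemma map_fderiv_eq_zero_of_eventually_map_eq_zero {𝕜 E F G : Type*} [NontriviallyNormedField 𝕜]
    [NormedAddCommGroup E] [NormedSpace 𝕜 E] [NormedAddCommGroup F] [NormedSpace 𝕜 F]
    [NormedAddCommGroup G] [NormedSpace 𝕜 G] {g : E → F} {x : E} (hg : DifferentiableAt 𝕜 g x)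
    (φ : F →L[𝕜] G) (h : ∀ᶠ y in nhds x, φ (g y) = 0) (v : E) : φ (fderiv 𝕜 g x v) = 0 := by
  have hφg : HasFDerivAt (fun y => φ (g y)) (φ.comp (fderiv 𝕜 g x)) x :=
    φ.hasFDerivAt.comp x hg.hasFDerivAt
  have h0 : HasFDerivAt (fun y => φ (g y)) (0 : E →L[𝕜] G) x :=
    (hasFDerivAt_const 0 x).congr_of_eventuallyEq h
  exact congrArg (· v) (hφg.unique h0)

section SkewJacobian

variable {ι : Type*} [Fintype ι] [DecidableEq ι]

lemma ContinuousLinearMap.eq_zero_of_apply_single {F : Type*} [NormedAddCommGroup F]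
    [NormedSpace ℝ F] {L : (ι → ℝ) →L[ℝ] F} (h : ∀ i, L (Pi.single i 1) = 0) : L = 0 :=
  ContinuousLinearMap.coe_injective <| (Pi.basisFun ℝ ι).ext fun i => by simpa using h i

theorem fderiv_fderiv_eq_zero_of_skew {u : (ι → ℝ) → ι → ℝ} {x : ι → ℝ}
    (hu : ContDiffAt ℝ 2 u x)
    (hskew : ∀ᶠ y in nhds x, (LinearMap.toMatrix' (fderiv ℝ u y : (ι → ℝ) →ₗ[ℝ] ι → ℝ))ᵀ =
      -LinearMap.toMatrix' (fderiv ℝ u y : (ι → ℝ) →ₗ[ℝ] ι → ℝ)) :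
    fderiv ℝ (fderiv ℝ u) x = 0 := by
  set D := fderiv ℝ (fderiv ℝ u) x
  have hsymm : ∀ v w, D v w = D w v := hu.isSymmSndFDerivAt (by simp)
  have hdiff : DifferentiableAt ℝ (fderiv ℝ u) x :=
    (hu.fderiv_right (m := 1) le_rfl).differentiableAt one_ne_zero
  have hanti (v : ι → ℝ) (i j : ι) : D v (Pi.single j 1) i = -D v (Pi.single i 1) j := by
    let φ : ((ι → ℝ) →L[ℝ] ι → ℝ) →L[ℝ] ℝ :=
      (ContinuousLinearMap.proj (R := ℝ) (φ := fun _ : ι => ℝ) i).comp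
          (ContinuousLinearMap.apply ℝ (ι → ℝ) (Pi.single j 1)) +
        (ContinuousLinearMap.proj (R := ℝ) (φ := fun _ : ι => ℝ) j).comp
          (ContinuousLinearMap.apply ℝ (ι → ℝ) (Pi.single i 1))
    refine eq_neg_of_add_eq_zero_left (map_fderiv_eq_zero_of_eventually_map_eq_zero hdiff φ ?_ v)
    filter_upwards [hskew] with y hy
    have := congrFun₂ hy j i
    simp only [transpose_apply, Matrix.neg_apply, LinearMap.toMatrix'_apply,
      ContinuousLinearMap.coe_coe] at this
    simp [φ, this]
  have hzero := eq_zero_of_symm_of_antisymm (f := fun k j i => D (Pi.single k 1) (Pi.single j 1) i)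
    (fun _ _ _ => by rw [hsymm]) (fun _ _ _ => hanti ..)
  exact ContinuousLinearMap.eq_zero_of_apply_single fun k =>
    ContinuousLinearMap.eq_zero_of_apply_single fun j => funext fun i => hzero k j i

end SkewJacobian

lemma jac_eq_toMatrix' {n : ℕ} {u : (Fin n → ℝ) → Fin n → ℝ} {x : Fin n → ℝ}
    (hu : DifferentiableAt ℝ u x) :
    jac u x = LinearMap.toMatrix' (fderiv ℝ u x : (Fin n → ℝ) →ₗ[ℝ] Fin n → ℝ) := by
  ext i j
  simp [jac, pd, fderiv_pi (differentiableAt_pi.mp hu)]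

theorem trace_T_jac_zero_implies_affine_general (n : ℕ) (ω : ℝ)
    (hω : 1 - 2 / (n : ℝ) < ω)
    (U : Set (Fin n → ℝ)) (hUo : IsOpen U) (hUc : IsConnected U)
    (u : (Fin n → ℝ) → Fin n → ℝ) (hu : ContDiffOn ℝ 2 u U)
    (htr : ∀ x ∈ U, Matrix.trace (elastT n ω (jac u x) * (jac u x)ᵀ) = 0) :
    ∃ (A : Matrix (Fin n) (Fin n) ℝ) (c : Fin n → ℝ),
      Aᵀ = -A ∧ ∀ x ∈ U, u x = A.mulVec x + c := by
  obtain ⟨x₀, hx₀⟩ := hUc.nonempty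
  have hC2 : ∀ x ∈ U, ContDiffAt ℝ 2 u x := fun x hx => hu.contDiffAt (hUo.mem_nhds hx)
  have hdiff : ∀ x ∈ U, DifferentiableAt ℝ u x := fun x hx =>
    (hC2 x hx).differentiableAt two_ne_zero
  have hskew : ∀ x ∈ U, (jac u x)ᵀ = -jac u x := fun x hx =>
    transpose_eq_neg_of_trace_elastT_mul_transpose_eq_zero hω (htr x hx)
  have hD2 : Set.EqOn (fderiv ℝ (fderiv ℝ u)) 0 U := fun x hx =>
    fderiv_fderiv_eq_zero_of_skew (hC2 x hx) <| Filter.eventually_of_mem (hUo.mem_nhds hx)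
      fun y hy => by simpa only [jac_eq_toMatrix' (hdiff y hy)] using hskew y hy
  have hD : ∀ x ∈ U, fderiv ℝ u x = fderiv ℝ u x₀ := fun x hx =>
    hUo.is_const_of_fderiv_eq_zero hUc.isPreconnected
      ((hu.fderiv_of_isOpen hUo (m := 1) le_rfl).differentiableOn one_ne_zero) hD2 hx hx₀
  obtain ⟨c, hc⟩ := hUo.exists_eq_add_of_fderiv_eq hUc.isPreconnected
    (hu.differentiableOn two_ne_zero) (fderiv ℝ u x₀).differentiableOn
    fun x hx => by rw [hD x hx, ContinuousLinearMap.fderiv]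
  refine ⟨jac u x₀, c, hskew x₀ hx₀, fun x hx => ?_⟩
  rw [hc hx, jac_eq_toMatrix' (hdiff x₀ hx₀), LinearMap.toMatrix'_mulVec,
    ContinuousLinearMap.coe_coe]

theorem trace_T_jac_zero_implies_affine (n : ℕ) (hn : 2 ≤ n) (ω : ℝ)
    (hω : 1 - 2 / (n : ℝ) < ω)
    (U : Set (Fin n → ℝ)) (hUo : IsOpen U) (hUc : IsConnected U)
    (u : (Fin n → ℝ) → Fin n → ℝ) (hu : ContDiffOn ℝ 2 u U)
    (htr : ∀ x ∈ U, Matrix.trace (elastT n ω (jac u x) * (jac u x)ᵀ) = 0) :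
    ∃ (A : Matrix (Fin n) (Fin n) ℝ) (c : Fin n → ℝ),
      Aᵀ = -A ∧ ∀ x ∈ U, u x = A.mulVec x + c :=
  trace_T_jac_zero_implies_affine_general n ω hω U hUo hUc u hu htr
end

section
/- Let n ≥ 2 be an integer and ω > 1 − 2/n a real number. Let V ⊆ ℝⁿ be open and let u : V → ℝⁿ be continuously differentiable on V. Assume that the (nonnegative, continuous) function x ↦ tr(T(ω,Du(x))·Du(x)ᵗ) is Lebesgue integrable on V and that ∫_V tr(T(ω,Du(x))·Du(x)ᵗ) dx ≤ 0. Then Du(x) + Du(x)ᵗ = 0 for every x ∈ V. -/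
open Matrix MeasureTheory

lemma trace_formula {n : ℕ} (ω : ℝ) (A : Matrix (Fin n) (Fin n) ℝ) :
    Matrix.trace (elastT n ω A * Aᵀ)
      = (ω - 1) * (Matrix.trace A) ^ 2
        + (1 / 2) * ∑ i, ∑ j, (A i j + A j i) ^ 2 := by
  have h1 : Matrix.trace (A * Aᵀ) = ∑ i, ∑ j, A i j * A i j := by
    simp [Matrix.trace, Matrix.mul_apply, Matrix.diag]
  have h2 : Matrix.trace (Aᵀ * Aᵀ) = ∑ i, ∑ j, A j i * A i j := by
    simp [Matrix.trace, Matrix.mul_apply, Matrix.diag]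
  have key : ∑ i, ∑ j, (A i j + A j i) ^ 2
      = 2 * ((∑ i, ∑ j, A i j * A i j) + ∑ i, ∑ j, A j i * A i j) := by
    have e1 : ∀ i j : Fin n, (A i j + A j i) ^ 2
        = (A i j * A i j + A j i * A j i) + 2 * (A j i * A i j) := by
      intro i j; ring
    simp_rw [e1, Finset.sum_add_distrib]
    rw [show (∑ i, ∑ j, A j i * A j i) = ∑ i, ∑ j, A i j * A i j from
      Finset.sum_comm]
    simp_rw [← Finset.mul_sum]
    ring
  simp only [elastT, add_mul, smul_mul_assoc, one_mul, Matrix.trace_add,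
    Matrix.trace_smul, smul_eq_mul, Matrix.trace_transpose, h1, h2, key]
  ring

lemma key_alg {n : ℕ} (hn : 0 < n) {ω : ℝ} (hω : 1 - 2 / (n : ℝ) < ω)
    (A : Matrix (Fin n) (Fin n) ℝ) :
    0 ≤ Matrix.trace (elastT n ω A * Aᵀ) ∧
      (Matrix.trace (elastT n ω A * Aᵀ) = 0 → A + Aᵀ = 0) := by
  have hn' : (0 : ℝ) < n := by exact_mod_cast hn
  set Q : ℝ := ∑ i, ∑ j, (A i j + A j i) ^ 2 with hQdef
  have hQ0 : 0 ≤ Q := Finset.sum_nonneg fun i _ => Finset.sum_nonneg fun j _ => sq_nonneg _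
  have hdiag : ∑ i, (A i i + A i i) ^ 2 ≤ Q :=
    Finset.sum_le_sum fun i _ =>
      Finset.single_le_sum (f := fun j => (A i j + A j i) ^ 2)
        (fun j _ => sq_nonneg _) (Finset.mem_univ i)
  have htrQ : (2 * Matrix.trace A) ^ 2 ≤ n * Q := by
    have h1 : (∑ i : Fin n, (A i i + A i i)) ^ 2
        ≤ (Finset.univ.card : ℝ) * ∑ i : Fin n, (A i i + A i i) ^ 2 :=
      sq_sum_le_card_mul_sum_sq
    have h2 : (∑ i : Fin n, (A i i + A i i)) = 2 * Matrix.trace A := by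
      simp [Matrix.trace, Matrix.diag, Finset.sum_add_distrib, two_mul]
    rw [h2, Finset.card_univ, Fintype.card_fin] at h1
    calc (2 * Matrix.trace A) ^ 2 ≤ (n : ℝ) * ∑ i : Fin n, (A i i + A i i) ^ 2 := h1
      _ ≤ n * Q := by
          exact mul_le_mul_of_nonneg_left hdiag (le_of_lt hn')
  have hc : 0 < (ω - 1) * n + 2 := by
    have h2 : (1 - 2 / (n : ℝ)) * n < ω * n := mul_lt_mul_of_pos_right hω hn'
    have h3 : (1 - 2 / (n : ℝ)) * n = n - 2 := by field_simp
    nlinarith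
  have hpos : 0 ≤ (ω - 1) * (Matrix.trace A) ^ 2 + (1 / 2) * Q := by
    rcases le_or_gt 1 ω with h | h
    · have h1 : 0 ≤ (ω - 1) * (Matrix.trace A) ^ 2 :=
        mul_nonneg (by linarith) (sq_nonneg _)
      linarith
    · have h1 : (ω - 1) * (n * Q) ≤ (ω - 1) * (2 * Matrix.trace A) ^ 2 :=
        mul_le_mul_of_nonpos_left htrQ (by linarith)
      nlinarith [mul_nonneg hc.le hQ0]
  have hQzero : (ω - 1) * (Matrix.trace A) ^ 2 + (1 / 2) * Q = 0 → Q = 0 := by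
    intro h0
    refine le_antisymm ?_ hQ0
    rcases le_or_gt 1 ω with h | h
    · have h1 : 0 ≤ (ω - 1) * (Matrix.trace A) ^ 2 :=
        mul_nonneg (by linarith) (sq_nonneg _)
      linarith
    · have h1 : (ω - 1) * (n * Q) ≤ (ω - 1) * (2 * Matrix.trace A) ^ 2 :=
        mul_le_mul_of_nonpos_left htrQ (by linarith)
      by_contra hq
      push_neg at hq
      nlinarith [mul_pos hc hq]
  rw [trace_formula]
  constructor
  · exact hpos
  · intro h0
    have hQz : Q = 0 := hQzero h0
    have hall : ∀ i ∈ (Finset.univ : Finset (Fin n)),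
        (∑ j, (A i j + A j i) ^ 2) = 0 := by
      rw [Finset.sum_eq_zero_iff_of_nonneg
        (fun i _ => Finset.sum_nonneg fun j _ => sq_nonneg _)] at hQz
      exact hQz
    ext i j
    have h2 := (Finset.sum_eq_zero_iff_of_nonneg (fun j _ => sq_nonneg _)).mp
      (hall i (Finset.mem_univ i)) j (Finset.mem_univ j)
    have h3 : A i j + A j i = 0 := by
      have := sq_eq_zero_iff.mp h2
      exact this
    simp [Matrix.add_apply, Matrix.transpose_apply, h3]

theorem integral_trace_T_nonpos_implies_skew (n : ℕ) (hn : 2 ≤ n) (ω : ℝ)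
    (hω : 1 - 2 / (n : ℝ) < ω)
    (V : Set (Fin n → ℝ)) (hV : IsOpen V)
    (u : (Fin n → ℝ) → Fin n → ℝ) (hu : ContDiffOn ℝ 1 u V)
    (hint : IntegrableOn
      (fun x => Matrix.trace (elastT n ω (jac u x) * (jac u x)ᵀ)) V volume)
    (hle : ∫ x in V, Matrix.trace (elastT n ω (jac u x) * (jac u x)ᵀ) ≤ 0) :
    ∀ x ∈ V, jac u x + (jac u x)ᵀ = 0 := by
  have hn0 : 0 < n := lt_of_lt_of_le (by norm_num) hn
  set g : (Fin n → ℝ) → ℝ :=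
    fun x => Matrix.trace (elastT n ω (jac u x) * (jac u x)ᵀ) with hg
  have hnonneg : ∀ x, 0 ≤ g x := fun x => (key_alg hn0 hω (jac u x)).1
  have hzero_int : ∫ x in V, g x = 0 :=
    le_antisymm hle (integral_nonneg fun x => hnonneg x)
  have hae : g =ᵐ[volume.restrict V] 0 :=
    (integral_eq_zero_iff_of_nonneg_ae (ae_of_all _ fun x => hnonneg x) hint).mp
      hzero_int
  -- continuity of the Jacobian entries on V
  have hcont_entry : ∀ i j, ContinuousOn (fun x => jac u x i j) V := by
    intro i j
    have hui : ContDiffOn ℝ 1 (fun w => u w i) V :=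
      (ContinuousLinearMap.proj (R := ℝ) (φ := fun _ : Fin n => ℝ) i).contDiff.comp_contDiffOn hu
    have hf : ContinuousOn (fderiv ℝ (fun w => u w i)) V :=
      hui.continuousOn_fderiv_of_isOpen hV le_rfl
    have happ := (ContinuousLinearMap.apply ℝ ℝ
      ((Pi.single j 1 : Fin n → ℝ))).continuous.comp_continuousOn hf
    simpa [jac, pd, Function.comp_def] using happ
  have hcontg : ContinuousOn g V := by
    have hg2 : ContinuousOn (fun x =>
        (ω - 1) * (∑ i, jac u x i i) ^ 2
          + (1 / 2) * ∑ i, ∑ j, (jac u x i j + jac u x j i) ^ 2) V := by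
      apply ContinuousOn.add
      · exact continuousOn_const.mul
          ((continuousOn_finset_sum _ fun i _ => hcont_entry i i).pow 2)
      · exact continuousOn_const.mul
          (continuousOn_finset_sum _ fun i _ =>
            continuousOn_finset_sum _ fun j _ =>
              ((hcont_entry i j).add (hcont_entry j i)).pow 2)
    refine hg2.congr fun x hx => ?_
    show Matrix.trace (elastT n ω (jac u x) * (jac u x)ᵀ) = _
    rw [trace_formula]
    simp [Matrix.trace, Matrix.diag]
  -- the open set where g is positive is null, hence empty
  set W : Set (Fin n → ℝ) := V ∩ g ⁻¹' Set.Ioi 0 with hW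
  have hWopen : IsOpen W := hcontg.isOpen_inter_preimage hV isOpen_Ioi
  have hWnull : volume W = 0 := by
    have h1 : volume.restrict V {y | g y ≠ 0} = 0 := by
      simpa using ae_iff.mp hae
    have h2 : volume.restrict V W = 0 :=
      measure_mono_null (fun y hy => ne_of_gt (Set.mem_Ioi.mp hy.2)) h1
    rwa [Measure.restrict_apply hWopen.measurableSet,
      Set.inter_eq_left.mpr Set.inter_subset_left] at h2
  have hWempty : W = ∅ := by
    by_contra h
    exact absurd hWnull
      (hWopen.measure_pos volume (Set.nonempty_iff_ne_empty.mpr h)).ne'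
  intro x hx
  have hgx : g x = 0 := by
    rcases eq_or_lt_of_le (hnonneg x) with h | h
    · exact h.symm
    · exact absurd (show x ∈ W from ⟨hx, h⟩) (by simp [hWempty])
  exact (key_alg hn0 hω (jac u x)).2 hgx
end
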